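/- For real numbers x > 0 and x₀ > 0, the lower bound ln(1+x₀) + x₀/(x₀+1) − (x₀²/(x₀+1))·(1/x) of ln(1+x) holds with equality if and only if x = x₀. -/

import Mathlib

/-! The bound is the tangent line of the strictly convex function `u ↦ log (1 + 1/u)` at
`u = 1/x₀`, evaluated at `u = 1/x`. Concretely, with `t = (1 + x) / (1 + x₀)`, the gap between
`log (1 + x)` and the bound splits as `(log t - (1 - t⁻¹)) + (x - x₀)² / ((1 + x)(x₀ + 1)x)`,
a sum of two nonnegative terms of which the second vanishes only at `x = x₀`. -/

open Real

lemma log_one_add_sub_lower_bound {x x₀ : ℝ} (hx : -1 < x) (hx0 : x ≠ 0) (hx₀ : -1 < x₀) :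
    log (1 + x) - (log (1 + x₀) + x₀ / (x₀ + 1) - (x₀ ^ 2 / (x₀ + 1)) * (1 / x)) =
      (log ((1 + x) / (1 + x₀)) - (1 - ((1 + x) / (1 + x₀))⁻¹)) +
        (x - x₀) ^ 2 / ((1 + x) * (x₀ + 1) * x) := by
  have h1x : 1 + x ≠ 0 := (by linarith : (0:ℝ) < _).ne'
  have h1x₀ : 1 + x₀ ≠ 0 := (by linarith : (0:ℝ) < _).ne'
  have hx₀1 : x₀ + 1 ≠ 0 := (by linarith : (0:ℝ) < _).ne'
  rw [log_div h1x h1x₀]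
  field_simp
  ring

theorem log_lower_bound_eq_iff (x x₀ : ℝ) (hx : 0 < x) (hx₀ : 0 < x₀) :
    Real.log (1 + x) =
      Real.log (1 + x₀) + x₀ / (x₀ + 1) - (x₀ ^ 2 / (x₀ + 1)) * (1 / x) ↔ x = x₀ := by
  constructor
  · intro h
    have hgap := log_one_add_sub_lower_bound (x₀ := x₀) (by linarith) hx.ne' (by linarith)
    have hlog : 1 - ((1 + x) / (1 + x₀))⁻¹ ≤ log ((1 + x) / (1 + x₀)) :=
      one_sub_inv_le_log_of_pos (by positivity)
    have hsq : 0 ≤ (x - x₀) ^ 2 / ((1 + x) * (x₀ + 1) * x) := by positivity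
    have hzero : (x - x₀) ^ 2 / ((1 + x) * (x₀ + 1) * x) = 0 := by linarith
    have hden : (1 + x) * (x₀ + 1) * x ≠ 0 := by positivity
    rw [div_eq_zero_iff, or_iff_left hden, pow_eq_zero_iff two_ne_zero, sub_eq_zero] at hzero
    exact hzero
  · rintro rfl
    field_simp
    ring
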